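/- Let u : ℝ × ℝ → ℝ, u = u(t,x), be a C³ solution of the dissipative Camassa–Holm-type equation and set m := u - u_{xx} and m₀(x) := m(0,x), u₀(x) := u(0,x). Assume that for every t ≥ 0: the functions x ↦ u(t,x), x ↦ ∂_t u(t,x) and x ↦ u_{xx}(t,x) are integrable on ℝ; u_x(t,x) → 0 as x → ±∞; the flux Φ(t,x) := (3/2)u² - u_{tx} - u u_{xx} - (1/2)u_x² - α u - (β/3)u³ - (γ/4)u⁴ - Γ u_{xx} - λ u_x tends to 0 as x → ±∞ and x ↦ ∂_x Φ(t,x) is integrable; and t ↦ ∫_ℝ u(t,x) dx is differentiable with derivative ∫_ℝ ∂_t u(t,x) dx. Then for all t ≥ 0: e^{-λ t}∫_ℝ m₀(x) dx = ∫_ℝ m(t,x) dx = ∫_ℝ u(t,x) dx = e^{-λ t}∫_ℝ u₀(x) dx. -/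

import Mathlib

open MeasureTheory Filter

/-- Partial derivative with respect to the first (time) variable of a curried
function `u : ℝ → ℝ → ℝ`, `u = u t x`. -/
noncomputable def pt (u : ℝ → ℝ → ℝ) : ℝ → ℝ → ℝ := fun t x => deriv (fun s => u s x) t

/-- Partial derivative with respect to the second (space) variable of a curried
function `u : ℝ → ℝ → ℝ`, `u = u t x`. -/
noncomputable def px (u : ℝ → ℝ → ℝ) : ℝ → ℝ → ℝ := fun t x => deriv (fun y => u t y) x

/-- The flux `Φ` of the first conservation law of the dissipative
Camassa–Holm-type equation. -/
noncomputable def Phi (lam α β γ Γ : ℝ) (u : ℝ → ℝ → ℝ) : ℝ → ℝ → ℝ := fun t x =>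
  (3 / 2) * (u t x) ^ 2 - px (pt u) t x - u t x * px (px u) t x
    - (1 / 2) * (px u t x) ^ 2 - α * u t x - (β / 3) * (u t x) ^ 3
    - (γ / 4) * (u t x) ^ 4 - Γ * px (px u) t x - lam * px u t x

/-!
By the equation, `∂ₓΦ = -u_t - λu`, and `∫ u_xx = 0` because `u_x` vanishes at `±∞`. Integrating
over `ℝ`, the flux term drops out as well, so `I(t) = ∫ u(t) = ∫ m(t)` solves `I' = -λ I` and hence
`I(t) = e^{-λt} I(0)`.
-/

section PartialDerivatives

variable {v : ℝ → ℝ → ℝ}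

open Function

theorem hasDerivAt_px (hv : Differentiable ℝ (uncurry v)) (t x : ℝ) :
    HasDerivAt (fun y => v t y) (px v t x) x :=
  ((hv (t, x)).comp x ((differentiableAt_const t).prodMk differentiableAt_id)).hasDerivAt

theorem px_eq_fderiv (hv : Differentiable ℝ (uncurry v)) (t x : ℝ) :
    px v t x = fderiv ℝ (uncurry v) (t, x) (0, 1) :=
  ((hv (t, x)).hasFDerivAt.comp_hasDerivAt x
    ((hasDerivAt_const x t).prodMk (hasDerivAt_id x))).deriv

theorem pt_eq_fderiv (hv : Differentiable ℝ (uncurry v)) (t x : ℝ) :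
    pt v t x = fderiv ℝ (uncurry v) (t, x) (1, 0) :=
  ((hv (t, x)).hasFDerivAt.comp_hasDerivAt (l := uncurry v) t
    ((hasDerivAt_id' t).prodMk (hasDerivAt_const t x))).deriv

variable {m n : WithTop ℕ∞}

theorem contDiff_px (hv : ContDiff ℝ n (uncurry v)) (hmn : m + 1 ≤ n) :
    ContDiff ℝ m (uncurry (px v)) := by
  have hdiff := hv.differentiable (ne_bot_of_le_ne_bot (by simp) hmn)
  have h : uncurry (px v) = fun p => fderiv ℝ (uncurry v) p (0, 1) :=
    funext fun p => px_eq_fderiv hdiff p.1 p.2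
  rw [h]
  exact (hv.fderiv_right hmn).clm_apply contDiff_const

theorem contDiff_pt (hv : ContDiff ℝ n (uncurry v)) (hmn : m + 1 ≤ n) :
    ContDiff ℝ m (uncurry (pt v)) := by
  have hdiff := hv.differentiable (ne_bot_of_le_ne_bot (by simp) hmn)
  have h : uncurry (pt v) = fun p => fderiv ℝ (uncurry v) p (1, 0) :=
    funext fun p => pt_eq_fderiv hdiff p.1 p.2
  rw [h]
  exact (hv.fderiv_right hmn).clm_apply contDiff_const

end PartialDerivatives

theorem eq_exp_mul_of_hasDerivAt_mul_self {F : ℝ → ℝ} {c : ℝ}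
    (hF : ∀ s, 0 ≤ s → HasDerivAt F (c * F s) s) {t : ℝ} (ht : 0 ≤ t) :
    F t = Real.exp (c * t) * F 0 := by
  set G : ℝ → ℝ := fun s => Real.exp (-c * s) * F s
  have hG : ∀ s, 0 ≤ s → HasDerivAt G 0 s := by
    intro s hs
    have hexp : HasDerivAt (fun r => Real.exp (-c * r)) (Real.exp (-c * s) * -c) s := by
      simpa using ((hasDerivAt_id s).const_mul (-c)).exp
    refine (hexp.mul (hF s hs)).congr_deriv ?_
    ring
  have hGt : G t = G 0 := constant_of_has_deriv_right_zero
    (fun s hs => (hG s hs.1).continuousAt.continuousWithinAt)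
    (fun s hs => (hG s hs.1).hasDerivWithinAt) t ⟨ht, le_rfl⟩
  have hexp : Real.exp (c * t) * Real.exp (-c * t) = 1 := by
    rw [← Real.exp_add, show c * t + -c * t = 0 by ring, Real.exp_zero]
  calc F t = Real.exp (c * t) * G t := by simp only [G]; rw [← mul_assoc, hexp, one_mul]
    _ = Real.exp (c * t) * G 0 := by rw [hGt]
    _ = Real.exp (c * t) * F 0 := by simp [G]

section DissipativeCamassaHolm

variable {lam α β γ Γ t x : ℝ} {u : ℝ → ℝ → ℝ}

theorem hasDerivAt_Phi (hu : ContDiff ℝ 3 (Function.uncurry u))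
    (heq :
      pt u t x - px (px (pt u)) t x + 3 * u t x * px u t x
          + lam * (u t x - px (px u) t x)
        = 2 * px u t x * px (px u) t x + u t x * px (px (px u)) t x
          + α * px u t x + β * (u t x) ^ 2 * px u t x + γ * (u t x) ^ 3 * px u t x
          + Γ * px (px (px u)) t x) :
    HasDerivAt (fun y => Phi lam α β γ Γ u t y) (-pt u t x - lam * u t x) x := by
  have hux : ContDiff ℝ 2 (Function.uncurry (px u)) := contDiff_px hu (by norm_num)
  have huxx : ContDiff ℝ 1 (Function.uncurry (px (px u))) := contDiff_px hux (by norm_num)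
  have hutx : ContDiff ℝ 1 (Function.uncurry (px (pt u))) :=
    contDiff_px (contDiff_pt hu (m := 2) (by norm_num)) (by norm_num)
  have dU := hasDerivAt_px (hu.differentiable (by norm_num)) t x
  have dUx := hasDerivAt_px (hux.differentiable (by norm_num)) t x
  have dUxx := hasDerivAt_px (huxx.differentiable (by norm_num)) t x
  have dUtx := hasDerivAt_px (hutx.differentiable (by norm_num)) t x
  refine ((((((((((dU.pow 2).const_mul (3 / 2)).sub dUtx).sub (dU.mul dUxx)).sub
    ((dUx.pow 2).const_mul (1 / 2))).sub (dU.const_mul α)).sub ((dU.pow 3).const_mul (β / 3))).sub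
    ((dU.pow 4).const_mul (γ / 4))).sub (dUxx.const_mul Γ)).sub (dUx.const_mul lam)).congr_deriv ?_
  norm_num
  linarith [heq]

theorem integral_pt_eq_neg_mul_integral
    (hPhi : ∀ x, HasDerivAt (fun y => Phi lam α β γ Γ u t y) (-pt u t x - lam * u t x) x)
    (hint : Integrable (fun x => u t x))
    (hfluxTop : Tendsto (fun x => Phi lam α β γ Γ u t x) atTop (nhds 0))
    (hfluxBot : Tendsto (fun x => Phi lam α β γ Γ u t x) atBot (nhds 0))
    (hfluxInt : Integrable (fun x => deriv (fun y => Phi lam α β γ Γ u t y) x)) :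
    ∫ x, pt u t x = -lam * ∫ x, u t x := by
  have hderiv : (fun x => deriv (fun y => Phi lam α β γ Γ u t y) x)
      = fun x => -pt u t x - lam * u t x := funext fun x => (hPhi x).deriv
  rw [hderiv] at hfluxInt
  have hflux : ∫ x, (-pt u t x - lam * u t x) = 0 := by
    simpa using integral_of_hasDerivAt_of_tendsto hPhi hfluxInt hfluxBot hfluxTop
  have hpt : (fun x => pt u t x) = fun x => -lam * u t x - (-pt u t x - lam * u t x) := by
    funext x; ring
  rw [hpt, integral_sub (hint.const_mul _) hfluxInt, hflux, integral_const_mul, sub_zero]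

end DissipativeCamassaHolm

theorem stmt_5_general (lam α β γ Γ : ℝ) (u : ℝ → ℝ → ℝ)
    (hu : ContDiff ℝ 3 (Function.uncurry u))
    (heq : ∀ t x : ℝ,
      pt u t x - px (px (pt u)) t x + 3 * u t x * px u t x
          + lam * (u t x - px (px u) t x)
        = 2 * px u t x * px (px u) t x + u t x * px (px (px u)) t x
          + α * px u t x + β * (u t x) ^ 2 * px u t x + γ * (u t x) ^ 3 * px u t x
          + Γ * px (px (px u)) t x)
    (hint : ∀ t : ℝ, 0 ≤ t → Integrable (fun x => u t x))
    (hintxx : ∀ t : ℝ, 0 ≤ t → Integrable (fun x => px (px u) t x))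
    (huxTop : ∀ t : ℝ, 0 ≤ t → Tendsto (fun x => px u t x) atTop (nhds 0))
    (huxBot : ∀ t : ℝ, 0 ≤ t → Tendsto (fun x => px u t x) atBot (nhds 0))
    (hfluxTop : ∀ t : ℝ, 0 ≤ t → Tendsto (fun x => Phi lam α β γ Γ u t x) atTop (nhds 0))
    (hfluxBot : ∀ t : ℝ, 0 ≤ t → Tendsto (fun x => Phi lam α β γ Γ u t x) atBot (nhds 0))
    (hfluxInt : ∀ t : ℝ, 0 ≤ t →
      Integrable (fun x => deriv (fun y => Phi lam α β γ Γ u t y) x))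
    (hdiff : ∀ t : ℝ, 0 ≤ t →
      HasDerivAt (fun s => ∫ x : ℝ, u s x) (∫ x : ℝ, pt u t x) t) :
    ∀ t : ℝ, 0 ≤ t →
      Real.exp (-lam * t) * (∫ x : ℝ, (u 0 x - px (px u) 0 x))
          = (∫ x : ℝ, (u t x - px (px u) t x))
        ∧ (∫ x : ℝ, (u t x - px (px u) t x)) = (∫ x : ℝ, u t x)
        ∧ (∫ x : ℝ, u t x) = Real.exp (-lam * t) * ∫ x : ℝ, u 0 x := by
  have hux : Differentiable ℝ (Function.uncurry (px u)) :=
    (contDiff_px hu (m := 2) (by norm_num)).differentiable (by norm_num)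
  have hm : ∀ s, 0 ≤ s → ∫ x, (u s x - px (px u) s x) = ∫ x, u s x := by
    intro s hs
    have huxx : ∫ x, px (px u) s x = 0 := by
      simpa using integral_of_hasDerivAt_of_tendsto (hasDerivAt_px hux s) (hintxx s hs)
        (huxBot s hs) (huxTop s hs)
    rw [integral_sub (hint s hs) (hintxx s hs), huxx, sub_zero]
  have hI : ∀ s, 0 ≤ s → HasDerivAt (fun s => ∫ x, u s x) (-lam * ∫ x, u s x) s := fun s hs =>
    integral_pt_eq_neg_mul_integral (fun x => hasDerivAt_Phi hu (heq s x)) (hint s hs)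
      (hfluxTop s hs) (hfluxBot s hs) (hfluxInt s hs) ▸ hdiff s hs
  intro t ht
  have hIt := eq_exp_mul_of_hasDerivAt_mul_self hI ht
  exact ⟨by rw [hm 0 le_rfl, hm t ht, hIt], hm t ht, hIt⟩

/-- with `m = u - u_xx`,
`e^{-λt}∫ m₀ = ∫ m(t) = ∫ u(t) = e^{-λt}∫ u₀` (Theorem 1.3 of the paper). -/
theorem stmt_5 (lam α β γ Γ : ℝ) (u : ℝ → ℝ → ℝ)
    (hu : ContDiff ℝ 3 (Function.uncurry u))
    (heq : ∀ t x : ℝ,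
      pt u t x - px (px (pt u)) t x + 3 * u t x * px u t x
          + lam * (u t x - px (px u) t x)
        = 2 * px u t x * px (px u) t x + u t x * px (px (px u)) t x
          + α * px u t x + β * (u t x) ^ 2 * px u t x + γ * (u t x) ^ 3 * px u t x
          + Γ * px (px (px u)) t x)
    (hint : ∀ t : ℝ, 0 ≤ t → Integrable (fun x => u t x))
    (hintt : ∀ t : ℝ, 0 ≤ t → Integrable (fun x => pt u t x))
    (hintxx : ∀ t : ℝ, 0 ≤ t → Integrable (fun x => px (px u) t x))
    (huxTop : ∀ t : ℝ, 0 ≤ t → Tendsto (fun x => px u t x) atTop (nhds 0))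
    (huxBot : ∀ t : ℝ, 0 ≤ t → Tendsto (fun x => px u t x) atBot (nhds 0))
    (hfluxTop : ∀ t : ℝ, 0 ≤ t → Tendsto (fun x => Phi lam α β γ Γ u t x) atTop (nhds 0))
    (hfluxBot : ∀ t : ℝ, 0 ≤ t → Tendsto (fun x => Phi lam α β γ Γ u t x) atBot (nhds 0))
    (hfluxInt : ∀ t : ℝ, 0 ≤ t →
      Integrable (fun x => deriv (fun y => Phi lam α β γ Γ u t y) x))
    (hdiff : ∀ t : ℝ, 0 ≤ t →
      HasDerivAt (fun s => ∫ x : ℝ, u s x) (∫ x : ℝ, pt u t x) t) :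
    ∀ t : ℝ, 0 ≤ t →
      Real.exp (-lam * t) * (∫ x : ℝ, (u 0 x - px (px u) 0 x))
          = (∫ x : ℝ, (u t x - px (px u) t x))
        ∧ (∫ x : ℝ, (u t x - px (px u) t x)) = (∫ x : ℝ, u t x)
        ∧ (∫ x : ℝ, u t x) = Real.exp (-lam * t) * ∫ x : ℝ, u 0 x :=
  stmt_5_general lam α β γ Γ u hu heq hint hintxx huxTop huxBot hfluxTop hfluxBot hfluxInt hdiff
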